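/- Mean value of generalized Hikami functions: for h ∈ 𝔥 and nonempty J ⊂ {1,…,r} with J ∩ J^h = ∅, the function g_J^h has zero mean value: Σ_{n=1}^{2P} g_J^h(n) = 0. (This follows from the identity 2^{t_h}·Σ_{n mod 2P} g_J^h(n) z^n ≡ z^P ∏_{j∉J}(z^{h_j p̂_j}+z^{-h_j p̂_j}) ∏_{j∈J}(z^{h_j p̂_j}-z^{-h_j p̂_j}) in ℤ[z]/(z^{2P}-1), evaluated at z = 1, since each factor indexed by j ∈ J vanishes at z = 1.) -/

import Mathlib

/-!
Fix `j₀ ∈ J`. Modulo `p j₀` every `p̂ j` with `j ≠ j₀` vanishes while `h j₀ * p̂ j₀` does not, so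
the sign `ε j₀` of a representation `n ≡ P + ∑ ε j * h j * p̂ j (mod 2P)` is determined by `n`.
Flipping `ε j₀` from `-1` to `1` shifts `n` by `D = 2 * h j₀ * p̂ j₀` and changes the sign of
`g n`. Hence `g = a - a (· + D)`, where `a` is the `2P`-periodic restriction of `g` to the points
with `ε j₀ = 1`, and a sum of a periodic function over a full period is invariant under shifts.
-/

open Finset Function

theorem Function.Periodic.sum_Icc_one_comp_add_one {M : Type*} [AddCommMonoid M] {f : ℤ → M}
    {c : ℤ} (hf : Periodic f c) : ∑ n ∈ Icc 1 c, f (n + 1) = ∑ n ∈ Icc 1 c, f n := by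
  rcases lt_or_ge c 1 with hc | hc
  · simp [Icc_eq_empty_of_lt hc]
  have hshift : ∑ n ∈ Icc 1 c, f (n + 1) = ∑ n ∈ Icc 2 (c + 1), f n := by
    rw [show Icc (2 : ℤ) (c + 1) = (Icc 1 c).map (addRightEmbedding 1) by
      rw [map_add_right_Icc]; rfl, sum_map]
    rfl
  rw [hshift, ← insert_Icc_right_eq_Icc_add_one (by omega : (2 : ℤ) ≤ c + 1),
    ← insert_Icc_add_one_left_eq_Icc hc, sum_insert (by simp), sum_insert (by simp),
    add_comm c, hf 1]
  rfl

theorem Function.Periodic.sum_Icc_one_comp_add {M : Type*} [AddCommMonoid M] {f : ℤ → M}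
    {c : ℤ} (hf : Periodic f c) (d : ℤ) : ∑ n ∈ Icc 1 c, f (n + d) = ∑ n ∈ Icc 1 c, f n := by
  induction d using Int.induction_on with
  | zero => simp
  | succ d ih =>
    rw [← ih, ← (hf.add_const d).sum_Icc_one_comp_add_one]
    simp only [add_assoc, add_comm (1 : ℤ)]
  | pred d ih =>
    rw [← ih, ← (hf.add_const (-d - 1)).sum_Icc_one_comp_add_one]
    exact sum_congr rfl fun n _ => by ring_nf

theorem sum_Icc_eq_zero_of_shift_neg {M : Type*} [AddCommGroup M] {g : ℤ → M}
    {A B : ℤ → Prop} {c D : ℤ}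
    (hA : ∀ n, A (n + c) ↔ A n) (hgA : ∀ n, A n → g (n + c) = g n)
    (hAB : ∀ n, A (n + D) ↔ B n) (hgB : ∀ n, B n → g (n + D) = -g n)
    (hdisj : ∀ n, A n → ¬ B n) (hsupp : ∀ n, ¬ A n → ¬ B n → g n = 0) :
    ∑ n ∈ Icc 1 c, g n = 0 := by
  classical
  set a : ℤ → M := fun n => if A n then g n else 0
  have ha : Periodic a c := fun n => by
    by_cases hn : A n
    · simp [a, hn, (hA n).2 hn, hgA n hn]
    · simp [a, hn, hA n]
  have hg : ∀ n, g n = a n - a (n + D) := fun n => by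
    by_cases hn : A n
    · simp [a, hn, hAB, hdisj n hn]
    · by_cases hn' : B n
      · simp [a, hn, hAB n, hn', hgB n hn']
      · simp [a, hn, hAB n, hn', hsupp n hn hn']
  rw [sum_congr rfl fun n _ => hg n, sum_sub_distrib, ha.sum_Icc_one_comp_add, sub_self]

section SignVector

variable {ι : Type*}

def IsSignVector (ε : ι → ℤ) : Prop := ∀ j, ε j = 1 ∨ ε j = -1

theorem IsSignVector.two_dvd_sub {ε ε' : ι → ℤ} (hε : IsSignVector ε) (hε' : IsSignVector ε')
    (j : ι) : 2 ∣ ε j - ε' j := by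
  rcases hε j with h | h <;> rcases hε' j with h' | h' <;> norm_num [h, h']

theorem IsSignVector.eq_neg_of_ne {ε ε' : ι → ℤ} (hε : IsSignVector ε) (hε' : IsSignVector ε')
    {j : ι} (hne : ε j ≠ ε' j) : ε' j = -ε j := by
  rcases hε j with h | h <;> rcases hε' j with h' | h' <;> simp_all

theorem IsSignVector.update [DecidableEq ι] {ε : ι → ℤ} (hε : IsSignVector ε) (j : ι) {s : ℤ}
    (hs : s = 1 ∨ s = -1) : IsSignVector (update ε j s) := fun k => by
  rcases eq_or_ne k j with rfl | hk
  · simpa using hs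
  · simpa [hk] using hε k

variable [Fintype ι] [DecidableEq ι]

def signedSum (h phat ε : ι → ℤ) : ℤ := ∑ j, ε j * h j * phat j

theorem signedSum_update (h phat ε : ι → ℤ) (j : ι) (s : ℤ) :
    signedSum h phat (update ε j s) = signedSum h phat ε + (s - ε j) * h j * phat j := by
  have hrest : ∑ k ∈ univ.erase j, update ε j s k * h k * phat k =
      ∑ k ∈ univ.erase j, ε k * h k * phat k :=
    sum_congr rfl fun k hk => by rw [update_of_ne (ne_of_mem_erase hk)]
  rw [signedSum, signedSum, ← add_sum_erase _ _ (mem_univ j), ← add_sum_erase _ _ (mem_univ j),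
    hrest, update_self]
  ring

theorem IsSignVector.not_two_mul_dvd_signedSum_sub {p h phat ε ε' : ι → ℤ} {j₀ : ι}
    (hdvd : ∀ j ≠ j₀, p j₀ ∣ phat j) (hcop : IsCoprime (p j₀) (phat j₀)) (hh : ¬ p j₀ ∣ h j₀)
    (hε : IsSignVector ε) (hε' : IsSignVector ε') (hne : ε j₀ ≠ ε' j₀) :
    ¬ 2 * p j₀ ∣ signedSum h phat ε - signedSum h phat ε' := by
  intro hsum
  have hsplit : signedSum h phat ε - signedSum h phat ε' = 2 * ε j₀ * h j₀ * phat j₀ +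
      ∑ j ∈ univ.erase j₀, (ε j - ε' j) * h j * phat j := by
    rw [signedSum, signedSum, ← sum_sub_distrib, ← add_sum_erase _ _ (mem_univ j₀),
      hε.eq_neg_of_ne hε' hne]
    congr 1
    · ring
    · exact sum_congr rfl fun j _ => by ring
  have hrest : 2 * p j₀ ∣ ∑ j ∈ univ.erase j₀, (ε j - ε' j) * h j * phat j :=
    dvd_sum fun j hj => by
      rw [mul_right_comm]
      exact mul_dvd_mul (hε.two_dvd_sub hε' j) (hdvd j (ne_of_mem_erase hj)) |>.mul_right _
  rw [hsplit, dvd_add_left hrest, mul_assoc, mul_assoc, mul_dvd_mul_iff_left two_ne_zero,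
    (Int.isUnit_iff.mpr (hε j₀)).dvd_mul_left] at hsum
  exact hh (hcop.dvd_of_dvd_mul_right hsum)

end SignVector

section SignRep

variable {ι : Type*} [Fintype ι] {P : ℤ} {h phat : ι → ℤ} {j₀ : ι}

/-- `n ∈ 𝔖^h`, witnessed by a sign vector `ε` with `ε j₀ = s`. -/
def IsSignRep (P : ℤ) (h phat : ι → ℤ) (j₀ : ι) (s n : ℤ) : Prop :=
  ∃ ε, IsSignVector ε ∧ ε j₀ = s ∧ 2 * P ∣ n - (P + signedSum h phat ε)

theorem isSignRep_add_two_mul_iff {s n : ℤ} :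
    IsSignRep P h phat j₀ s (n + 2 * P) ↔ IsSignRep P h phat j₀ s n := by
  simp only [IsSignRep, add_sub_right_comm n, dvd_add_self_right]

theorem dvd_sub_signedSum_update [DecidableEq ι] {ε : ι → ℤ} {n : ℤ} (s : ℤ)
    (hn : 2 * P ∣ n - (P + signedSum h phat ε)) :
    2 * P ∣ n + (s - ε j₀) * h j₀ * phat j₀ - (P + signedSum h phat (update ε j₀ s)) := by
  rwa [signedSum_update, show ∀ a b c d : ℤ, a + d - (b + (c + d)) = a - (b + c) by
    intros; ring]

theorem isSignRep_one_add_iff [DecidableEq ι] {n : ℤ} :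
    IsSignRep P h phat j₀ 1 (n + 2 * h j₀ * phat j₀) ↔ IsSignRep P h phat j₀ (-1) n := by
  constructor
  · rintro ⟨ε, hε, hε₀, hn⟩
    refine ⟨update ε j₀ (-1), hε.update j₀ (.inr rfl), update_self .., ?_⟩
    convert dvd_sub_signedSum_update (-1) hn using 2
    rw [hε₀]; ring
  · rintro ⟨ε, hε, hε₀, hn⟩
    refine ⟨update ε j₀ 1, hε.update j₀ (.inl rfl), update_self .., ?_⟩
    convert dvd_sub_signedSum_update 1 hn using 2
    rw [hε₀]; ring

theorem IsSignRep.not_neg_one [DecidableEq ι] {p : ι → ℤ} (hP : p j₀ ∣ P)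
    (hdvd : ∀ j ≠ j₀, p j₀ ∣ phat j) (hcop : IsCoprime (p j₀) (phat j₀)) (hh : ¬ p j₀ ∣ h j₀) {n : ℤ}
    (hn : IsSignRep P h phat j₀ 1 n) : ¬ IsSignRep P h phat j₀ (-1) n := by
  obtain ⟨ε, hε, hε₀, hε_n⟩ := hn
  rintro ⟨ε', hε', hε'₀, hε'_n⟩
  refine hε'.not_two_mul_dvd_signedSum_sub hdvd hcop hh hε (by rw [hε₀, hε'₀]; decide) ?_
  refine (mul_dvd_mul_left 2 hP).trans ?_
  convert dvd_sub hε_n hε'_n using 1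
  ring

end SignRep

theorem isCoprime_of_mul_eq_prod {ι : Type*} [Fintype ι] [DecidableEq ι] {p : ι → ℤ} {i : ι}
    {q : ℤ} (hp : p i ≠ 0) (hcop : ∀ j, i ≠ j → IsCoprime (p i) (p j))
    (hq : p i * q = ∏ j, p j) : IsCoprime (p i) q := by
  rw [← mul_prod_erase _ _ (mem_univ i)] at hq
  rw [mul_left_cancel₀ hp hq]
  exact IsCoprime.prod_right fun j hj => hcop j (ne_of_mem_erase hj).symm

theorem stmt_19_general (r : ℕ) (p : Fin r → ℤ)
    (hp : ∀ j, 0 < p j)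
    (hcop : ∀ i j : Fin r, i ≠ j → IsCoprime (p i) (p j))
    (P : ℤ) (hP : P = ∏ j, p j)
    (phat : Fin r → ℤ) (hphat : ∀ j, p j * phat j = P)
    (h : Fin r → ℤ)
    (J : Finset (Fin r))
    (hJne : J.Nonempty)
    (hJh : ∀ j ∈ J, ¬ p j ∣ h j)
    (g : ℤ → ℤ)
    (hgval : ∀ (n : ℤ) (ε : Fin r → ℤ), (∀ j, ε j = 1 ∨ ε j = -1) →
      2 * P ∣ n - (P + ∑ j, ε j * h j * phat j) → g n = ∏ j ∈ J, ε j)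
    (hgzero : ∀ n : ℤ,
      (¬ ∃ ε : Fin r → ℤ, (∀ j, ε j = 1 ∨ ε j = -1) ∧
        2 * P ∣ n - (P + ∑ j, ε j * h j * phat j)) → g n = 0) :
    ∑ n ∈ Finset.Icc (1 : ℤ) (2 * P), g n = 0 := by
  obtain ⟨j₀, hj₀⟩ := hJne
  have hp₀P : p j₀ ∣ P := Dvd.intro _ (hphat j₀)
  have hdvd : ∀ j ≠ j₀, p j₀ ∣ phat j := fun j hj =>
    (hcop j₀ j hj.symm).dvd_of_dvd_mul_left (hphat j ▸ hp₀P)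
  have hcop₀ : IsCoprime (p j₀) (phat j₀) :=
    isCoprime_of_mul_eq_prod (hp j₀).ne' (hcop j₀) (hP ▸ hphat j₀)
  refine sum_Icc_eq_zero_of_shift_neg (A := IsSignRep P h phat j₀ 1)
    (B := IsSignRep P h phat j₀ (-1)) (D := 2 * h j₀ * phat j₀)
    (fun _ => isSignRep_add_two_mul_iff) ?_ (fun _ => isSignRep_one_add_iff) ?_
    (fun _ => IsSignRep.not_neg_one hp₀P hdvd hcop₀ (hJh j₀ hj₀)) ?_
  · rintro n ⟨ε, hε, -, hn⟩
    rw [hgval n ε hε hn, hgval _ ε hε (by rwa [add_sub_right_comm, dvd_add_self_right])]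
  · rintro n ⟨ε, hε, hε₀, hn⟩
    have hn' := dvd_sub_signedSum_update (j₀ := j₀) 1 hn
    rw [hε₀, show (1 - -1 : ℤ) = 2 by norm_num] at hn'
    rw [hgval n ε hε hn, hgval _ _ (hε.update j₀ (.inl rfl)) hn', prod_update_of_mem hj₀,
      sdiff_singleton_eq_erase, ← mul_prod_erase J ε hj₀, hε₀]
    ring
  · intro n hn₁ hn₂
    refine hgzero n fun ⟨ε, hε, hn⟩ => ?_
    rcases hε j₀ with hε₀ | hε₀
    exacts [hn₁ ⟨ε, hε, hε₀, hn⟩, hn₂ ⟨ε, hε, hε₀, hn⟩]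

/-- Mean value of generalized Hikami functions: for `h ∈ 𝔥` and nonempty
`J ⊂ {1,…,r}` with `J ∩ J^h = ∅`, the `2P`-periodic function `g = g_J^h`
(equal to `∏_{j∈J} ε_j` at `n ≡ P + Σ_j ε_j h_j p̂_j (mod 2P)`, zero off
`𝔖^h`) has zero mean value: `Σ_{n=1}^{2P} g(n) = 0`. -/
theorem stmt_19 (r : ℕ) (hr : 3 ≤ r) (p : Fin r → ℤ)
    (hp : ∀ j, 0 < p j)
    (hcop : ∀ i j : Fin r, i ≠ j → IsCoprime (p i) (p j))
    (P : ℤ) (hP : P = ∏ j, p j)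
    (phat : Fin r → ℤ) (hphat : ∀ j, p j * phat j = P)
    (h : Fin r → ℤ)
    (hh₁ : ∀ j, 0 ≤ h j ∧ h j ≤ p j)
    (hh₂ : 3 ≤ Set.ncard {j : Fin r | ¬ p j ∣ h j})
    (J : Finset (Fin r))
    (hJne : J.Nonempty)
    (hJh : ∀ j ∈ J, ¬ p j ∣ h j)
    (g : ℤ → ℤ)
    (hgval : ∀ (n : ℤ) (ε : Fin r → ℤ), (∀ j, ε j = 1 ∨ ε j = -1) →
      2 * P ∣ n - (P + ∑ j, ε j * h j * phat j) → g n = ∏ j ∈ J, ε j)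
    (hgzero : ∀ n : ℤ,
      (¬ ∃ ε : Fin r → ℤ, (∀ j, ε j = 1 ∨ ε j = -1) ∧
        2 * P ∣ n - (P + ∑ j, ε j * h j * phat j)) → g n = 0) :
    ∑ n ∈ Finset.Icc (1 : ℤ) (2 * P), g n = 0 :=
  stmt_19_general r p hp hcop P hP phat hphat h J hJne hJh g hgval hgzero
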